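/- arXiv:math/0411330 — 5 statements merged into one kernel-verified Lean document; each statement's English description precedes it below -/
import Mathlib

section
/- Let Q be a finite quiver without oriented cycles. Then the cone C_Q = Σ_{α ∈ Q_1} ℕ·(e_{t(α)} - e_{s(α)}) ⊆ ℤ^{Q_0} equals the set X_Q of all x ∈ ℤ^{Q_0} with Σ_{i ∈ Q_0} x_i = 0 and Σ_{i ∈ F} x_i ≥ 0 for every filter F in Q. -/
/-!
Every generator `e_{t α} - e_{s α}` lies in `X_Q`, which is closed under addition, so `C_Q ⊆ X_Q`.
Conversely, let `0 ≠ x ∈ X_Q` and pick `v` with `x_v > 0`. Zero-sum filters containing `v` are closed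
under intersection (inclusion–exclusion plus nonnegativity), so there is a smallest one, `F₀`.
Since `F₀ \ {v}` has negative sum it is not a filter, so some arrow `α` with `t α = v` starts in `F₀`,
and minimality of `F₀` shows `x - (e_{t α} - e_{s α}) ∈ X_Q`. Acyclicity gives a height `h` that strictly
increases along arrows; the potential `∑ h_i x_i` is nonnegative on `X_Q` (write it as a sum of
sums over the filters `{h > k}`) and strictly drops at each such step, so the process terminates.
-/

open Finset

theorem exists_nat_height_of_acyclic {V : Type*} [Fintype V] {r : V → V → Prop}
    (hr : ∀ v, ¬ Relation.TransGen r v v) : ∃ h : V → ℕ, ∀ u w, r u w → h u < h w := by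
  classical
  refine ⟨fun v => #{u | Relation.TransGen r u v}, fun u w huw => card_lt_card ?_⟩
  rw [ssubset_iff_of_subset]
  · exact ⟨u, by simpa using Relation.TransGen.single huw, by simpa using hr u⟩
  · intro z hz
    simp only [mem_filter, mem_univ, true_and] at hz ⊢
    exact hz.tail huw

theorem sum_nsmul_eq_sum_range_sum_filter_lt {V M : Type*} [Fintype V] [AddCommMonoid M]
    (x : V → M) (h : V → ℕ) {N : ℕ} (hN : ∀ v, h v ≤ N) :
    ∑ v, h v • x v = ∑ k ∈ range N, ∑ v with k < h v, x v := by
  calc ∑ v, h v • x v = ∑ v, ∑ _k ∈ range (h v), x v := by simp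
    _ = _ := sum_comm' fun v k => by
      simp only [mem_univ, mem_range, true_and, mem_filter]
      exact ⟨fun hk => ⟨hk, hk.trans_le (hN v)⟩, And.left⟩

section

variable {V A : Type*} {s t : A → V}

variable (s t) in
def IsFilter (F : Finset V) : Prop :=
  ∀ a, s a ∈ F → t a ∈ F

theorem IsFilter.inter [DecidableEq V] {F G : Finset V} (hF : IsFilter s t F)
    (hG : IsFilter s t G) : IsFilter s t (F ∩ G) := fun a ha => by
  rw [mem_inter] at ha ⊢
  exact ⟨hF a ha.1, hG a ha.2⟩

theorem IsFilter.union [DecidableEq V] {F G : Finset V} (hF : IsFilter s t F)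
    (hG : IsFilter s t G) : IsFilter s t (F ∪ G) := fun a ha => by
  rw [mem_union] at ha ⊢
  exact ha.imp (hF a) (hG a)

theorem isFilter_univ [Fintype V] : IsFilter s t univ :=
  fun _ _ => mem_univ _

theorem isFilter_filter_lt [Fintype V] {h : V → ℕ} (hh : ∀ a, h (s a) ≤ h (t a)) (k : ℕ) :
    IsFilter s t {v | k < h v} := fun a ha => by
  simp only [mem_filter, mem_univ, true_and] at ha ⊢
  exact ha.trans_le (hh a)

/-- The set `X_Q` of the paper. -/
def filterCone [Fintype V] (s t : A → V) : AddSubmonoid (V → ℤ) where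
  carrier := {x | ∑ i, x i = 0 ∧ ∀ F, IsFilter s t F → 0 ≤ ∑ i ∈ F, x i}
  zero_mem' := by simp
  add_mem' hx hy := ⟨by simp [sum_add_distrib, hx.1, hy.1], fun F hF => by
    simpa [sum_add_distrib] using add_nonneg (hx.2 F hF) (hy.2 F hF)⟩

theorem sum_nsmul_nonneg_of_isFilter [Fintype V] {h : V → ℕ} (hh : ∀ a, h (s a) ≤ h (t a))
    {x : V → ℤ} (hx : ∀ F, IsFilter s t F → 0 ≤ ∑ i ∈ F, x i) : 0 ≤ ∑ v, h v • x v := by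
  rw [sum_nsmul_eq_sum_range_sum_filter_lt x h fun v => le_sup (f := h) (mem_univ v)]
  exact sum_nonneg fun k _ => hx _ (isFilter_filter_lt hh k)

theorem sum_single_sub_single [DecidableEq V] (F : Finset V) (i j : V) :
    ∑ v ∈ F, (Pi.single i 1 - Pi.single j 1 : V → ℤ) v =
      (if i ∈ F then 1 else 0) - (if j ∈ F then 1 else 0) := by
  simp only [Pi.sub_apply, sum_sub_distrib, sum_pi_single']

theorem single_sub_single_mem_filterCone [Fintype V] [DecidableEq V] (a : A) :
    (Pi.single (t a) 1 - Pi.single (s a) 1 : V → ℤ) ∈ filterCone s t := by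
  refine ⟨by simp, fun F hF => ?_⟩
  rw [sum_single_sub_single]
  by_cases hsa : s a ∈ F
  · simp [hsa, hF a hsa]
  · split_ifs <;> simp

theorem closure_le_filterCone [Fintype V] [DecidableEq V] :
    AddSubmonoid.closure {y : V → ℤ | ∃ a, y = Pi.single (t a) 1 - Pi.single (s a) 1} ≤
      filterCone s t :=
  AddSubmonoid.closure_le.mpr fun _ ⟨a, hy⟩ => hy ▸ single_sub_single_mem_filterCone a

theorem sub_single_sub_single_mem_filterCone [Fintype V] [DecidableEq V] {x : V → ℤ}
    (hx : x ∈ filterCone s t) {a : A}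
    (ha : ∀ F, IsFilter s t F → t a ∈ F → s a ∉ F → ∑ i ∈ F, x i ≠ 0) :
    x - (Pi.single (t a) 1 - Pi.single (s a) 1) ∈ filterCone s t := by
  have hsum (F : Finset V) : ∑ i ∈ F, (x - (Pi.single (t a) 1 - Pi.single (s a) 1) : V → ℤ) i =
      ∑ i ∈ F, x i - ((if t a ∈ F then 1 else 0) - (if s a ∈ F then 1 else 0)) := by
    rw [← sum_single_sub_single, ← sum_sub_distrib]
    rfl
  refine ⟨by simp [hx.1], fun F hF => ?_⟩
  have hxF := hx.2 F hF
  rw [hsum]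
  by_cases hsa : s a ∈ F
  · simpa [hsa, hF a hsa] using hxF
  by_cases hta : t a ∈ F
  · have := ha F hF hta hsa
    simp only [hta, hsa, if_true, if_false]
    omega
  · simpa [hsa, hta] using hxF

theorem sum_inter_eq_zero [Fintype V] [DecidableEq V] {x : V → ℤ} (hx : x ∈ filterCone s t)
    {F G : Finset V} (hF : IsFilter s t F) (hG : IsFilter s t G)
    (hxF : ∑ i ∈ F, x i = 0) (hxG : ∑ i ∈ G, x i = 0) : ∑ i ∈ F ∩ G, x i = 0 := by
  have := sum_union_inter (s₁ := F) (s₂ := G) (f := x)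
  have := hx.2 _ (hF.union hG)
  have := hx.2 _ (hF.inter hG)
  linarith

theorem exists_minimal_zero_sum_filter [Fintype V] [DecidableEq V] {x : V → ℤ}
    (hx : x ∈ filterCone s t) (v : V) :
    ∃ F₀, IsFilter s t F₀ ∧ v ∈ F₀ ∧ ∑ i ∈ F₀, x i = 0 ∧
      ∀ F, IsFilter s t F → v ∈ F → ∑ i ∈ F, x i = 0 → F₀ ⊆ F := by
  classical
  let S : Finset (Finset V) := {F | IsFilter s t F ∧ v ∈ F ∧ ∑ i ∈ F, x i = 0}
  have hS {F} : F ∈ S ↔ IsFilter s t F ∧ v ∈ F ∧ ∑ i ∈ F, x i = 0 := by simp [S]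
  obtain ⟨F₀, hF₀, hmin⟩ := S.exists_min_image card ⟨univ, hS.2 ⟨isFilter_univ, mem_univ v, hx.1⟩⟩
  obtain ⟨hF₀, hvF₀, hxF₀⟩ := hS.1 hF₀
  refine ⟨F₀, hF₀, hvF₀, hxF₀, fun F hF hvF hxF => ?_⟩
  have hinter : F₀ ∩ F ∈ S :=
    hS.2 ⟨hF₀.inter hF, mem_inter.2 ⟨hvF₀, hvF⟩, sum_inter_eq_zero hx hF₀ hF hxF₀ hxF⟩
  rw [← eq_of_subset_of_card_le inter_subset_left (hmin _ hinter)]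
  exact inter_subset_right

theorem exists_sub_single_sub_single_mem_filterCone [Fintype V] [DecidableEq V] {x : V → ℤ}
    (hx : x ∈ filterCone s t) {v : V} (hv : 0 < x v) :
    ∃ a, x - (Pi.single (t a) 1 - Pi.single (s a) 1) ∈ filterCone s t := by
  obtain ⟨F₀, hF₀, hvF₀, hxF₀, hmin⟩ := exists_minimal_zero_sum_filter hx v
  obtain ⟨a, rfl, hsa⟩ : ∃ a, t a = v ∧ s a ∈ F₀ := by
    by_contra! hno
    have herase : IsFilter s t (F₀.erase v) := fun a ha =>
      mem_erase.2 ⟨fun hta => hno a hta (mem_of_mem_erase ha), hF₀ a (mem_of_mem_erase ha)⟩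
    have := hx.2 _ herase
    have := sum_erase_add _ x hvF₀
    linarith
  exact ⟨a, sub_single_sub_single_mem_filterCone hx fun F hF hta hsaF hxF =>
    hsaF (hmin F hF hta hxF hsa)⟩

theorem mem_closure_of_mem_filterCone [Fintype V] [DecidableEq V] {h : V → ℕ}
    (hh : ∀ a, h (s a) < h (t a)) {x : V → ℤ} (hx : x ∈ filterCone s t) :
    x ∈ AddSubmonoid.closure {y : V → ℤ | ∃ a, y = Pi.single (t a) 1 - Pi.single (s a) 1} := by
  suffices key : ∀ n : ℕ, ∀ x ∈ filterCone s t, ∑ v, h v • x v < n →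
      x ∈ AddSubmonoid.closure {y : V → ℤ | ∃ a, y = Pi.single (t a) 1 - Pi.single (s a) 1} from
    key ((∑ v, h v • x v).toNat + 1) x hx
      (by push_cast; linarith [Int.self_le_toNat (∑ v, h v • x v)])
  intro n
  induction n with
  | zero =>
    intro x hx hlt
    exact absurd hlt (not_lt.2 (sum_nsmul_nonneg_of_isFilter (fun a => (hh a).le) hx.2))
  | succ n ih =>
    intro x hx hlt
    by_cases hx0 : x = 0
    · exact hx0 ▸ zero_mem _
    obtain ⟨v, -, hv⟩ := exists_pos_of_sum_zero_of_exists_nonzero x hx.1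
      (by simpa [funext_iff] using hx0)
    obtain ⟨a, hxa⟩ := exists_sub_single_sub_single_mem_filterCone hx hv
    have hdrop : ∑ v, h v • (x - (Pi.single (t a) 1 - Pi.single (s a) 1) : V → ℤ) v =
        ∑ v, h v • x v - (h (t a) - h (s a)) := by
      simp [mul_sub, sum_sub_distrib, Pi.single_apply]
    have := hh a
    rw [← sub_add_cancel x (Pi.single (t a) 1 - Pi.single (s a) 1)]
    exact add_mem (ih _ hxa (by push_cast at hlt ⊢; omega))
      (AddSubmonoid.subset_closure ⟨a, rfl⟩)

end

/-- `C_Q = X_Q` for a finite quiver `Q` without oriented cycles. -/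
theorem cone_eq_XQ {V A : Type} [Fintype V] [DecidableEq V] (s t : A → V)
    (hacyc : ∀ v : V, ¬ Relation.TransGen (fun u w : V => ∃ a : A, s a = u ∧ t a = w) v v)
    (x : V → ℤ) :
    x ∈ AddSubmonoid.closure
        {y : V → ℤ | ∃ a : A, y = Pi.single (t a) 1 - Pi.single (s a) 1} ↔
      (∑ i, x i = 0) ∧
        ∀ F : Finset V, (∀ a : A, s a ∈ F → t a ∈ F) → 0 ≤ ∑ i ∈ F, x i := by
  obtain ⟨h, hh⟩ := exists_nat_height_of_acyclic hacyc
  exact ⟨fun hx => closure_le_filterCone hx,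
    fun hx => mem_closure_of_mem_filterCone (fun a => hh _ _ ⟨a, rfl, rfl⟩) hx⟩
end

section
/- Let Q be a finite quiver without oriented cycles. Then the cone C_Q = Σ_{α ∈ Q_1} ℕ·(e_{t(α)} - e_{s(α)}) ⊆ ℤ^{Q_0} is saturated: if x ∈ ℤ^{Q_0} and λ·x ∈ C_Q for some positive integer λ, then x ∈ C_Q. -/
/-!
A vector lies in the cone spanned by the arrow vectors `e_{t a} - e_{s a}` iff its coordinates sum
to zero and its sum over every successor-closed set of vertices is nonnegative. Both conditions
are invariant under scaling by a positive integer, so the cone is saturated.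

For the converse, pick `w` with `x w > 0` and let `S` be the least successor-closed set containing
`w` on which `x` sums to zero (such sets are closed under intersection by the modularity of sums).
The vertices of `S` not reaching `w` form a successor-closed set, so `x` has nonpositive sum on the
vertices of `S` reaching `w`, and hence is negative at some `u` reaching `w`. Moving one unit from
`w` to `u` preserves the conditions and shrinks the positive part of `x`, while
`e_w - e_u` is a sum of arrow vectors along a path from `u` to `w`.
-/

namespace QuiverCone

open Finset

variable {V A : Type*} (s t : A → V)

def arrowCone [DecidableEq V] : AddSubmonoid (V → ℤ) :=
  AddSubmonoid.closure {y : V → ℤ | ∃ a : A, y = Pi.single (t a) 1 - Pi.single (s a) 1}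

def Adj (p q : V) : Prop :=
  ∃ a : A, s a = p ∧ t a = q

def IsSuccClosed (S : Finset V) : Prop :=
  ∀ a : A, s a ∈ S → t a ∈ S

def CutCondition [Fintype V] (x : V → ℤ) : Prop :=
  ∑ v, x v = 0 ∧ ∀ S : Finset V, IsSuccClosed s t S → 0 ≤ ∑ v ∈ S, x v

def IsTight (x : V → ℤ) (w : V) (S : Finset V) : Prop :=
  IsSuccClosed s t S ∧ ∑ v ∈ S, x v = 0 ∧ w ∈ S

variable {s t}

theorem isSuccClosed_univ [Fintype V] : IsSuccClosed s t (univ : Finset V) :=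
  fun _ _ => mem_univ _

theorem IsSuccClosed.union [DecidableEq V] {S T : Finset V} (hS : IsSuccClosed s t S)
    (hT : IsSuccClosed s t T) : IsSuccClosed s t (S ∪ T) := by
  intro a ha
  rcases mem_union.mp ha with h | h
  exacts [mem_union_left _ (hS a h), mem_union_right _ (hT a h)]

theorem IsSuccClosed.inter [DecidableEq V] {S T : Finset V} (hS : IsSuccClosed s t S)
    (hT : IsSuccClosed s t T) : IsSuccClosed s t (S ∩ T) := fun a ha =>
  mem_inter.mpr ⟨hS a (mem_inter.mp ha).1, hT a (mem_inter.mp ha).2⟩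

section DecidableEq

variable [DecidableEq V]

theorem sub_single_mem_arrowCone_of_reflTransGen {u w : V}
    (h : Relation.ReflTransGen (Adj s t) u w) :
    Pi.single w 1 - Pi.single u 1 ∈ arrowCone s t := by
  induction h with
  | refl => simpa only [sub_self] using zero_mem _
  | @tail v w _ hvw ih =>
    obtain ⟨a, rfl, rfl⟩ := hvw
    have hsplit : (Pi.single (t a) 1 - Pi.single u 1 : V → ℤ) =
        (Pi.single (t a) 1 - Pi.single (s a) 1) + (Pi.single (s a) 1 - Pi.single u 1) := by
      abel
    rw [hsplit]
    exact add_mem (AddSubmonoid.subset_closure ⟨a, rfl⟩) ih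

end DecidableEq

section Fintype

variable [Fintype V]

theorem CutCondition.of_nsmul {x : V → ℤ} {n : ℕ} (hn : 0 < n) (hx : CutCondition s t (n • x)) :
    CutCondition s t x := by
  have hsum : ∀ S : Finset V, ∑ v ∈ S, (n • x) v = n * ∑ v ∈ S, x v := fun S => by
    simp [mul_sum]
  have hn' : (0 : ℤ) < n := by exact_mod_cast hn
  refine ⟨?_, fun S hS => ?_⟩
  · exact (mul_eq_zero.mp (hsum univ ▸ hx.1)).resolve_left hn'.ne'
  · exact (mul_nonneg_iff_of_pos_left hn').mp (hsum S ▸ hx.2 S hS)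

theorem CutCondition.eq_zero_of_nonpos {x : V → ℤ} (hx : CutCondition s t x)
    (hpos : ∀ v, x v ≤ 0) : x = 0 :=
  funext fun v =>
    (sum_eq_zero_iff_of_nonpos fun v _ => hpos v).mp hx.1 v (mem_univ v)

variable [DecidableEq V]

theorem cutCondition_of_mem_arrowCone {x : V → ℤ} (hx : x ∈ arrowCone s t) :
    CutCondition s t x := by
  induction hx using AddSubmonoid.closure_induction with
  | mem y hy =>
    obtain ⟨a, rfl⟩ := hy
    refine ⟨by simp [sum_sub_distrib], fun S hS => ?_⟩
    simp only [Pi.sub_apply, sum_sub_distrib, sum_pi_single']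
    by_cases hsa : s a ∈ S
    · simp [hsa, hS a hsa]
    · by_cases hta : t a ∈ S <;> simp [hsa, hta]
  | zero => exact ⟨by simp, fun S _ => by simp⟩
  | add y z _ _ hy hz =>
    refine ⟨by simp [sum_add_distrib, hy.1, hz.1], fun S hS => ?_⟩
    simpa only [Pi.add_apply, sum_add_distrib] using add_nonneg (hy.2 S hS) (hz.2 S hS)

namespace CutCondition

variable {x : V → ℤ} (hx : CutCondition s t x)
include hx

theorem isTight_inter {w : V} {S T : Finset V} (hS : IsTight s t x w S) (hT : IsTight s t x w T) :
    IsTight s t x w (S ∩ T) := by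
  have hunion := hx.2 _ (hS.1.union hT.1)
  have hinter := hx.2 _ (hS.1.inter hT.1)
  have hmod : ∑ v ∈ S ∪ T, x v + ∑ v ∈ S ∩ T, x v = ∑ v ∈ S, x v + ∑ v ∈ T, x v :=
    sum_union_inter
  exact ⟨hS.1.inter hT.1, by linarith [hS.2.1, hT.2.1], mem_inter.mpr ⟨hS.2.2, hT.2.2⟩⟩

theorem exists_least_isTight (w : V) :
    ∃ S, IsTight s t x w S ∧ ∀ T, IsTight s t x w T → S ⊆ T := by
  classical
  have huniv : IsTight s t x w univ := ⟨isSuccClosed_univ, hx.1, mem_univ w⟩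
  obtain ⟨S, hSmem, hSmin⟩ :=
    exists_min_image (univ.filter (IsTight s t x w)) card ⟨univ, by simpa using huniv⟩
  have hS : IsTight s t x w S := (mem_filter.mp hSmem).2
  refine ⟨S, hS, fun T hT => inter_eq_left.mp ?_⟩
  exact eq_of_subset_of_card_le inter_subset_left
    (hSmin _ (mem_filter.mpr ⟨mem_univ _, hx.isTight_inter hS hT⟩))

theorem exists_neg_reaching {w : V} (hw : 0 < x w) :
    ∃ u, x u < 0 ∧ Relation.ReflTransGen (Adj s t) u w ∧
      ∀ T, IsTight s t x w T → u ∈ T := by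
  classical
  obtain ⟨S, hS, hSleast⟩ := hx.exists_least_isTight w
  set Reaches := fun v => Relation.ReflTransGen (Adj s t) v w
  suffices ∃ u ∈ S.filter Reaches, x u < 0 by
    obtain ⟨u, hu, hux⟩ := this
    exact ⟨u, hux, (mem_filter.mp hu).2, fun T hT => hSleast T hT (mem_filter.mp hu).1⟩
  have hnonreach : IsSuccClosed s t (S.filter (¬ Reaches ·)) := by
    intro a ha
    obtain ⟨haS, hnot⟩ := mem_filter.mp ha
    exact mem_filter.mpr ⟨hS.1 a haS, fun hr => hnot (.head ⟨a, rfl, rfl⟩ hr)⟩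
  have hsplit := sum_filter_add_sum_filter_not S Reaches x
  by_contra! hnonneg
  have hwle : x w ≤ ∑ v ∈ S.filter Reaches, x v :=
    single_le_sum hnonneg (mem_filter.mpr ⟨hS.2.2, .refl⟩)
  linarith [hx.2 _ hnonreach, hS.2.1]

theorem add_single_sub_single {u w : V} (hu : ∀ T, IsTight s t x w T → u ∈ T) :
    CutCondition s t (x + Pi.single u 1 - Pi.single w 1) := by
  have hsum : ∀ S : Finset V, ∑ v ∈ S, (x + Pi.single u 1 - Pi.single w 1 : V → ℤ) v =
      ∑ v ∈ S, x v + (if u ∈ S then 1 else 0) - (if w ∈ S then 1 else 0) := fun S => by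
    simp only [Pi.sub_apply, Pi.add_apply, sum_sub_distrib, sum_add_distrib, sum_pi_single']
  refine ⟨by rw [hsum univ, hx.1]; simp, fun S hS => ?_⟩
  rw [hsum]
  have hSx := hx.2 S hS
  by_cases hwS : w ∈ S
  · by_cases hzero : ∑ v ∈ S, x v = 0
    · simp [hu S ⟨hS, hzero, hwS⟩, hwS, hzero]
    · split_ifs <;> omega
  · split_ifs <;> omega

end CutCondition

theorem sum_toNat_add_single_sub_single_lt {x : V → ℤ} {u w : V} (hu : x u < 0) (hw : 0 < x w) :
    ∑ v, ((x + Pi.single u 1 - Pi.single w 1 : V → ℤ) v).toNat < ∑ v, (x v).toNat := by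
  have huw : u ≠ w := by rintro rfl; omega
  refine sum_lt_sum (fun v _ => ?_) ⟨w, mem_univ w, ?_⟩
  · rcases eq_or_ne v u with rfl | hvu
    · simp [huw]
      omega
    · simp only [Pi.sub_apply, Pi.add_apply, Pi.single_eq_of_ne hvu, Pi.single_apply]
      split_ifs <;> omega
  · simp [huw.symm]
    omega

theorem mem_arrowCone_of_cutCondition {x : V → ℤ} (hx : CutCondition s t x) :
    x ∈ arrowCone s t := by
  by_cases hpos : ∃ w, 0 < x w
  · obtain ⟨w, hw⟩ := hpos
    obtain ⟨u, hux, hreach, hu⟩ := hx.exists_neg_reaching hw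
    have hdecomp : x = (Pi.single w 1 - Pi.single u 1) + (x + Pi.single u 1 - Pi.single w 1) := by
      abel
    -- the decrease of the termination measure, for `termination_by`
    have := sum_toNat_add_single_sub_single_lt hux hw
    rw [hdecomp]
    exact add_mem (sub_single_mem_arrowCone_of_reflTransGen hreach)
      (mem_arrowCone_of_cutCondition (hx.add_single_sub_single hu))
  · push Not at hpos
    rw [hx.eq_zero_of_nonpos hpos]
    exact zero_mem _
termination_by ∑ v, (x v).toNat

theorem mem_arrowCone_iff {x : V → ℤ} : x ∈ arrowCone s t ↔ CutCondition s t x :=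
  ⟨cutCondition_of_mem_arrowCone, mem_arrowCone_of_cutCondition⟩

end Fintype

end QuiverCone

theorem cone_saturated_general {V A : Type} [Fintype V] [DecidableEq V] (s t : A → V)
    (x : V → ℤ) (lam : ℕ) (hlam : 0 < lam)
    (hx : lam • x ∈ AddSubmonoid.closure
      {y : V → ℤ | ∃ a : A, y = Pi.single (t a) 1 - Pi.single (s a) 1}) :
    x ∈ AddSubmonoid.closure
      {y : V → ℤ | ∃ a : A, y = Pi.single (t a) 1 - Pi.single (s a) 1} :=
  QuiverCone.mem_arrowCone_iff.mpr ((QuiverCone.mem_arrowCone_iff.mp hx).of_nsmul hlam)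

/-- the cone `C_Q` of a finite quiver without oriented cycles is saturated. -/
theorem cone_saturated {V A : Type} [Fintype V] [DecidableEq V] (s t : A → V)
    (hacyc : ∀ v : V, ¬ Relation.TransGen (fun u w : V => ∃ a : A, s a = u ∧ t a = w) v v)
    (x : V → ℤ) (lam : ℕ) (hlam : 0 < lam)
    (hx : lam • x ∈ AddSubmonoid.closure
      {y : V → ℤ | ∃ a : A, y = Pi.single (t a) 1 - Pi.single (s a) 1}) :
    x ∈ AddSubmonoid.closure
      {y : V → ℤ | ∃ a : A, y = Pi.single (t a) 1 - Pi.single (s a) 1} :=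
  cone_saturated_general s t x lam hlam hx
end

section
/- Let Q be a finite quiver without oriented cycles, and let F be a proper nonempty filter in Q. Write Q' and Q'' for the full subquivers on vertex sets F and Q_0 \ F respectively. If x ∈ ℤ^{Q_0} satisfies Σ_{i ∈ Q_0} x_i = 0, Σ_{i ∈ G} x_i ≥ 0 for every filter G, and Σ_{i ∈ F} x_i = 0, then the restriction x' of x to F lies in X_{Q'} and the restriction x'' of x to Q_0 \ F lies in X_{Q''}. -/
/-!
A filter `G'` of the full subquiver on a filter `F` is itself a filter of `Q`, and for a filter
`G''` of the full subquiver on the complement of `F`, the set `G'' ∪ F` is a filter of `Q`.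
Hence the filter inequalities for `x` give those for the restrictions, using `x_F = 0` in the
second case; the restricted sums vanish because `x_Q = 0` and `x_F = 0`.
-/

open Finset

namespace Quiver

variable {V A : Type} (s t : A → V)

def IsFilter (G : Finset V) : Prop := ∀ a, s a ∈ G → t a ∈ G

variable {s t}

theorem IsFilter.map_subtype {F : Finset V} (hF : IsFilter s t F) {G : Finset {v // v ∈ F}}
    (hG : ∀ (a : A) (h1 : s a ∈ F) (h2 : t a ∈ F), (⟨s a, h1⟩ : {v // v ∈ F}) ∈ G →
      (⟨t a, h2⟩ : {v // v ∈ F}) ∈ G) :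
    IsFilter s t (G.map (Function.Embedding.subtype _)) := by
  intro a ha
  obtain ⟨⟨v, hv⟩, hvG, rfl⟩ := mem_map.1 ha
  exact mem_map.2 ⟨⟨t a, hF a hv⟩, hG a hv (hF a hv) hvG, rfl⟩

theorem IsFilter.map_subtype_compl_union [DecidableEq V] {F : Finset V} (hF : IsFilter s t F)
    {G : Finset {v // v ∉ F}}
    (hG : ∀ (a : A) (h1 : s a ∉ F) (h2 : t a ∉ F), (⟨s a, h1⟩ : {v // v ∉ F}) ∈ G →
      (⟨t a, h2⟩ : {v // v ∉ F}) ∈ G) :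
    IsFilter s t (G.map (Function.Embedding.subtype _) ∪ F) := by
  intro a ha
  rcases mem_union.1 ha with ha | ha
  · obtain ⟨⟨v, hv⟩, hvG, rfl⟩ := mem_map.1 ha
    by_cases ht : t a ∈ F
    · exact mem_union_right _ ht
    · exact mem_union_left _ (mem_map.2 ⟨⟨t a, ht⟩, hG a hv ht hvG, rfl⟩)
  · exact mem_union_right _ (hF a ha)

end Quiver

theorem Finset.disjoint_map_subtype_notMem {V : Type} (F : Finset V) (G : Finset {v // v ∉ F}) :
    Disjoint (G.map (Function.Embedding.subtype _)) F :=
  disjoint_left.2 fun _ hv => by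
    obtain ⟨⟨_, hw⟩, _, rfl⟩ := mem_map.1 hv
    exact hw

theorem Finset.sum_subtype_notMem {V M : Type} [Fintype V] [DecidableEq V] [AddCommGroup M]
    (F : Finset V) (f : V → M) :
    ∑ i : {v // v ∉ F}, f i = ∑ i, f i - ∑ i ∈ F, f i := by
  rw [← sum_compl_add_sum F f, add_sub_cancel_right]
  exact (sum_subtype Fᶜ (fun _ => mem_compl) f).symm

theorem restriction_mem_XQ_general {V A : Type} [Fintype V] [DecidableEq V] (s t : A → V)
    (F : Finset V) (hFfil : ∀ a : A, s a ∈ F → t a ∈ F)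
    (x : V → ℤ)
    (hsum : ∑ i, x i = 0)
    (hfil : ∀ G : Finset V, (∀ a : A, s a ∈ G → t a ∈ G) → 0 ≤ ∑ i ∈ G, x i)
    (hF0 : ∑ i ∈ F, x i = 0) :
    ((∑ i : {i : V // i ∈ F}, x i.1 = 0) ∧
      ∀ G : Finset {i : V // i ∈ F},
        (∀ (a : A) (h1 : s a ∈ F) (h2 : t a ∈ F), (⟨s a, h1⟩ : {i : V // i ∈ F}) ∈ G →
          (⟨t a, h2⟩ : {i : V // i ∈ F}) ∈ G) →
        0 ≤ ∑ i ∈ G, x i.1) ∧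
    ((∑ i : {i : V // i ∉ F}, x i.1 = 0) ∧
      ∀ G : Finset {i : V // i ∉ F},
        (∀ (a : A) (h1 : s a ∉ F) (h2 : t a ∉ F), (⟨s a, h1⟩ : {i : V // i ∉ F}) ∈ G →
          (⟨t a, h2⟩ : {i : V // i ∉ F}) ∈ G) →
        0 ≤ ∑ i ∈ G, x i.1) := by
  have hF : Quiver.IsFilter s t F := hFfil
  refine ⟨⟨by rwa [sum_coe_sort F x], fun G hG => ?_⟩,
    ⟨by rw [sum_subtype_notMem, hsum, hF0, sub_zero], fun G hG => ?_⟩⟩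
  · simpa only [sum_map, Function.Embedding.coe_subtype] using hfil _ (hF.map_subtype hG)
  · have h := hfil _ (hF.map_subtype_compl_union hG)
    rwa [sum_union (disjoint_map_subtype_notMem F G), hF0, add_zero, sum_map, Function.Embedding.coe_subtype] at h

/-- if `x ∈ X_Q` and a proper nonempty filter `F` satisfies `x_F = 0`, then the
restrictions of `x` to `F` and its complement lie in `X_{Q'}` and `X_{Q''}` respectively, where
`Q'`, `Q''` are the full subquivers on `F` and `Q_0 \ F`. -/
theorem restriction_mem_XQ {V A : Type} [Fintype V] [DecidableEq V] (s t : A → V)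
    (hacyc : ∀ v : V, ¬ Relation.TransGen (fun u w : V => ∃ a : A, s a = u ∧ t a = w) v v)
    (F : Finset V) (hFfil : ∀ a : A, s a ∈ F → t a ∈ F)
    (hFne : F.Nonempty) (hFproper : F ≠ Finset.univ)
    (x : V → ℤ)
    (hsum : ∑ i, x i = 0)
    (hfil : ∀ G : Finset V, (∀ a : A, s a ∈ G → t a ∈ G) → 0 ≤ ∑ i ∈ G, x i)
    (hF0 : ∑ i ∈ F, x i = 0) :
    ((∑ i : {i : V // i ∈ F}, x i.1 = 0) ∧
      ∀ G : Finset {i : V // i ∈ F},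
        (∀ (a : A) (h1 : s a ∈ F) (h2 : t a ∈ F), (⟨s a, h1⟩ : {i : V // i ∈ F}) ∈ G →
          (⟨t a, h2⟩ : {i : V // i ∈ F}) ∈ G) →
        0 ≤ ∑ i ∈ G, x i.1) ∧
    ((∑ i : {i : V // i ∉ F}, x i.1 = 0) ∧
      ∀ G : Finset {i : V // i ∉ F},
        (∀ (a : A) (h1 : s a ∉ F) (h2 : t a ∉ F), (⟨s a, h1⟩ : {i : V // i ∉ F}) ∈ G →
          (⟨t a, h2⟩ : {i : V // i ∉ F}) ∈ G) →
        0 ≤ ∑ i ∈ G, x i.1) :=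
  restriction_mem_XQ_general s t F hFfil x hsum hfil hF0
end

section
/- Let Q be a finite quiver and w ∈ ℤ^{Q_1} a nonzero element of Ker(U), where U : ℤ^{Q_1} → ℤ^{Q_0} sends f_α to e_{t(α)} - e_{s(α)}. Then there exists a vector u ∈ ℤ^{Q_1} associated to a primitive nonoriented cycle in Q (so each u_α ∈ {-1,0,1} and u ∈ Ker(U), u ≠ 0) such that u⁺ ≤ w⁺ and u⁻ ≤ w⁻ componentwise. -/
/-!
Split `w` into `w⁺` carried by the arrows and `w⁻` carried by their formal inverses: this is a
nonnegative circulation on the double quiver, so whatever it carries into a vertex it also carries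
out, and its support never contains an arrow together with its inverse. Choosing at each vertex
one outgoing support edge turns "follow the chosen edge" into a self-map of a finite set of
vertices. Along a periodic orbit of this map the chosen edges form a nonoriented cycle without
backtracking that visits each vertex once; as its edges lie in the support of the circulation,
its vector takes the sign of `w` wherever it is nonzero.
-/

namespace QuiverCycles

variable {V A : Type} (s t : A → V)

/-- Source of an edge of the double quiver (`inl a` = arrow `a`, `inr a` = its formal inverse). -/
def esrc : A ⊕ A → V
  | Sum.inl a => s a
  | Sum.inr a => t a

/-- Target of an edge of the double quiver. -/
def etgt : A ⊕ A → V
  | Sum.inl a => t a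
  | Sum.inr a => s a

/-- Formal inverse of an edge of the double quiver. -/
def erev : A ⊕ A → A ⊕ A
  | Sum.inl a => Sum.inr a
  | Sum.inr a => Sum.inl a

/-- `e :: l` is a nonoriented cycle: consecutive edges match up without backtracking, and the
last edge closes up with the first one, again without backtracking. -/
def IsNonorientedCycle (e : A ⊕ A) (l : List (A ⊕ A)) : Prop :=
  List.Chain (fun f g => etgt s t f = esrc s t g ∧ g ≠ erev f) e l ∧
    etgt s t ((e :: l).getLast (List.cons_ne_nil e l)) = esrc s t e ∧
    (l ≠ [] → e ≠ erev ((e :: l).getLast (List.cons_ne_nil e l)))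

/-- A nonoriented cycle is primitive iff it visits every vertex at most once. -/
def IsPrimitive (e : A ⊕ A) (l : List (A ⊕ A)) : Prop :=
  ((e :: l).map (esrc s t)).Nodup

/-- The vector in `ℤ^{Q_1}` associated with a nonoriented cycle. -/
def cycVec [DecidableEq A] (c : List (A ⊕ A)) : A → ℤ :=
  fun a => (c.count (Sum.inl a) : ℤ) - (c.count (Sum.inr a) : ℤ)

end QuiverCycles

-- `cycVec` counts with the derived `BEq` of `A ⊕ A`, which the core library does not make lawful.
instance {α β : Type*} [BEq α] [BEq β] [LawfulBEq α] [LawfulBEq β] : LawfulBEq (α ⊕ β) where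
  rfl {x} := by cases x with | inl a => exact BEq.rfl (a := a) | inr b => exact BEq.rfl (a := b)
  eq_of_beq {x y} h := by
    cases x <;> cases y <;> first
      | exact congrArg _ (eq_of_beq h) | exact absurd h Bool.false_ne_true

theorem List.map_range_succ_eq_cons {α : Type*} (f : ℕ → α) (n : ℕ) :
    (List.range (n + 1)).map f = f 0 :: (List.range n).map fun k => f (k + 1) := by
  rw [List.range_succ_eq_map, List.map_cons, List.map_map]
  rfl

theorem Function.periodicPts_nonempty {α : Type*} [Finite α] [Nonempty α] (f : α → α) :
    (Function.periodicPts f).Nonempty := by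
  obtain ⟨i, j, hij, hfij⟩ := Set.finite_univ.exists_lt_map_eq_of_forall_mem
    (f := fun n => f^[n] (Classical.arbitrary α)) fun _ => Set.mem_univ _
  refine ⟨f^[i] (Classical.arbitrary α),
    Function.mk_mem_periodicPts (Nat.sub_pos_of_lt hij) ?_⟩
  change f^[j - i] (f^[i] _) = _
  rw [← Function.iterate_add_apply, Nat.sub_add_cancel hij.le]
  exact hfij.symm

namespace QuiverCycles

section Walks

variable {X V : Type*} (src tgt : X → V)

theorem exists_pos_src_eq_tgt_of_circulation [Fintype X] [DecidableEq V] {g : X → ℤ}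
    (hg : 0 ≤ g) (hcirc : ∑ x, g x • (Pi.single (tgt x) 1 - Pi.single (src x) 1 : V → ℤ) = 0)
    {e : X} (he : 0 < g e) : ∃ f, 0 < g f ∧ src f = tgt e := by
  have hbal : ∑ x with tgt x = tgt e, g x = ∑ x with src x = tgt e, g x := by
    have := congrFun hcirc (tgt e)
    simp only [Finset.sum_apply, Pi.smul_apply, Pi.sub_apply, Pi.single_apply, smul_eq_mul,
      mul_sub, mul_ite, mul_one, mul_zero, Finset.sum_sub_distrib, sub_eq_zero,
      Pi.zero_apply] at this
    simpa only [Finset.sum_filter, @eq_comm _ (tgt e)] using this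
  have hout : 0 < ∑ x with src x = tgt e, g x :=
    hbal ▸ he.trans_le (Finset.single_le_sum (fun x _ => hg x) (by simp))
  obtain ⟨f, hf, hfpos⟩ :=
    Finset.exists_lt_of_sum_lt (f := fun _ => (0 : ℤ)) (by simpa using hout)
  exact ⟨f, hfpos, (Finset.mem_filter.1 hf).2⟩

theorem exists_periodic_walk [Finite V] {E : Set X} (hne : E.Nonempty)
    (hsucc : ∀ x ∈ E, ∃ y ∈ E, src y = tgt x) :
    ∃ (γ : ℕ → X) (n : ℕ), 0 < n ∧ (∀ k, γ k ∈ E) ∧ (∀ k, src (γ (k + 1)) = tgt (γ k)) ∧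
      γ n = γ 0 ∧ Set.InjOn (src ∘ γ) (Set.Iio n) := by
  let S := {v : V // ∃ x ∈ E, src x = v}
  choose out hout using fun v : S => v.2
  let φ : S → S := fun v => ⟨tgt (out v), hsucc _ (hout v).1⟩
  obtain ⟨x₀, hx₀⟩ := hne
  have : Nonempty S := ⟨⟨src x₀, x₀, hx₀, rfl⟩⟩
  obtain ⟨v, hv⟩ := Function.periodicPts_nonempty φ
  have hsrc : ∀ k, src (out (φ^[k] v)) = φ^[k] v := fun k => (hout _).2
  refine ⟨fun k => out (φ^[k] v), Function.minimalPeriod φ v,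
    Function.minimalPeriod_pos_of_mem_periodicPts hv, fun k => (hout _).1, fun k => ?_,
    by simp only [Function.iterate_minimalPeriod, Function.iterate_zero_apply], ?_⟩
  · rw [hsrc, Function.iterate_succ_apply']
  · intro i hi j hj hij
    exact Function.iterate_injOn_Iio_minimalPeriod hi hj
      (Subtype.val_injective (by simpa only [Function.comp_apply, hsrc] using hij))

end Walks

variable {V A : Type} (s t : A → V)

def edgeBoundary [DecidableEq V] (x : A ⊕ A) : V → ℤ :=
  Pi.single (etgt s t x) 1 - Pi.single (esrc s t x) 1

theorem edgeBoundary_inr [DecidableEq V] (a : A) :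
    edgeBoundary s t (.inr a) = -edgeBoundary s t (.inl a) := by
  simp [edgeBoundary, esrc, etgt]

theorem sum_cycVec_smul_edgeBoundary [Fintype A] [DecidableEq A] [DecidableEq V]
    (c : List (A ⊕ A)) :
    ∑ a, cycVec c a • edgeBoundary s t (.inl a) = (c.map (edgeBoundary s t)).sum := by
  induction c with
  | nil => simp [cycVec]
  | cons x c ih =>
    rw [List.map_cons, List.sum_cons, ← ih]
    cases x <;>
      simp only [cycVec, List.count_cons, beq_iff_eq, Sum.inl.injEq, Sum.inr.injEq, reduceCtorEq,
        Nat.cast_add, Nat.cast_ite, Nat.cast_one, Nat.cast_zero, add_smul, sub_smul, ite_smul,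
        one_smul, zero_smul, Finset.sum_add_distrib, Finset.sum_sub_distrib, Finset.sum_ite_eq,
        Finset.mem_univ, if_true, if_false, add_zero, edgeBoundary_inr] <;>
      abel

theorem sum_map_edgeBoundary_eq_zero_of_periodic [DecidableEq V] {γ : ℕ → A ⊕ A} {n : ℕ}
    (hstep : ∀ k, esrc s t (γ (k + 1)) = etgt s t (γ k)) (hper : γ n = γ 0) :
    (((List.range n).map γ).map (edgeBoundary s t)).sum = 0 := by
  have hbd : ∀ k, edgeBoundary s t (γ k) =
      Pi.single (esrc s t (γ (k + 1))) 1 - Pi.single (esrc s t (γ k)) 1 := fun k => by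
    rw [hstep]; rfl
  simp only [List.map_map, Function.comp_def, hbd]
  rw [List.sum_range_sub n fun k => (Pi.single (esrc s t (γ k)) 1 : V → ℤ), hper, sub_self]

theorem isNonorientedCycle_of_periodic {γ : ℕ → A ⊕ A} {m : ℕ}
    (hstep : ∀ k, esrc s t (γ (k + 1)) = etgt s t (γ k)) (hback : ∀ k, γ (k + 1) ≠ erev (γ k))
    (hper : γ (m + 1) = γ 0) :
    IsNonorientedCycle s t (γ 0) ((List.range m).map fun k => γ (k + 1)) := by
  have hlast : (γ 0 :: (List.range m).map fun k => γ (k + 1)).getLast (List.cons_ne_nil _ _) =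
      γ m := by
    simp [← List.map_range_succ_eq_cons]
  refine ⟨?_, ?_, fun _ => ?_⟩
  · show List.IsChain _ (γ 0 :: _)
    rw [← List.map_range_succ_eq_cons, List.isChain_map, List.isChain_range_succ]
    exact fun k _ => ⟨(hstep k).symm, hback k⟩
  · rw [hlast, ← hstep, hper]
  · rw [hlast, ← hper]
    exact hback m

theorem isPrimitive_of_injOn {γ : ℕ → A ⊕ A} {m : ℕ}
    (hinj : Set.InjOn (esrc s t ∘ γ) (Set.Iio (m + 1))) :
    IsPrimitive s t (γ 0) ((List.range m).map fun k => γ (k + 1)) := by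
  rw [IsPrimitive, ← List.map_range_succ_eq_cons, List.map_map]
  exact List.nodup_range.map_on fun i hi j hj h =>
    hinj (by simpa using hi) (by simpa using hj) h

def splitFlow (w : A → ℤ) : A ⊕ A → ℤ :=
  Sum.elim (fun a => (w a)⁺) (fun a => (w a)⁻)

theorem splitFlow_nonneg (w : A → ℤ) : 0 ≤ splitFlow w := by
  rintro (a | a) <;> simp [splitFlow]

theorem exists_pos_splitFlow {w : A → ℤ} (hw : w ≠ 0) : ∃ x, 0 < splitFlow w x := by
  obtain ⟨a, ha⟩ := Function.ne_iff.mp hw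
  rcases (ha : w a ≠ 0).lt_or_gt with h | h
  · exact ⟨.inr a, by simpa [splitFlow]⟩
  · exact ⟨.inl a, by simpa [splitFlow]⟩

theorem not_pos_splitFlow_erev {w : A → ℤ} {x : A ⊕ A} (hx : 0 < splitFlow w x) :
    ¬ 0 < splitFlow w (erev x) := by
  cases x <;> simp_all [splitFlow, erev] <;> omega

theorem sum_splitFlow_smul_edgeBoundary [Fintype A] [DecidableEq V] (w : A → ℤ) :
    ∑ x, splitFlow w x • edgeBoundary s t x = ∑ a, w a • edgeBoundary s t (.inl a) := by
  rw [Fintype.sum_sum_type, ← Finset.sum_add_distrib]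
  refine Finset.sum_congr rfl fun a _ => ?_
  rw [splitFlow, Sum.elim_inl, Sum.elim_inr, edgeBoundary_inr, smul_neg, ← sub_eq_add_neg,
    ← sub_smul, posPart_sub_negPart]

theorem cycVec_apply_of_nodup [DecidableEq A] {c : List (A ⊕ A)} (hc : c.Nodup) (a : A) :
    cycVec c a = (if .inl a ∈ c then 1 else 0) - (if .inr a ∈ c then 1 else 0) := by
  simp [cycVec, hc.count]

theorem cycVec_apply_cases [DecidableEq A] {w : A → ℤ} {c : List (A ⊕ A)} (hc : c.Nodup)
    (hpos : ∀ x ∈ c, 0 < splitFlow w x) (a : A) :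
    (cycVec c a = 1 ∧ 0 < w a) ∨ cycVec c a = 0 ∨ (cycVec c a = -1 ∧ w a < 0) := by
  have hl : Sum.inl a ∈ c → 0 < w a := fun h => by simpa [splitFlow] using hpos _ h
  have hr : Sum.inr a ∈ c → w a < 0 := fun h => by simpa [splitFlow] using hpos _ h
  rw [cycVec_apply_of_nodup hc]
  by_cases Sum.inl a ∈ c <;> by_cases Sum.inr a ∈ c <;> simp_all

theorem cycVec_ne_zero_of_mem [DecidableEq A] {w : A → ℤ} {c : List (A ⊕ A)} (hc : c.Nodup)
    (hpos : ∀ x ∈ c, 0 < splitFlow w x) {x : A ⊕ A} (hx : x ∈ c) : cycVec c ≠ 0 := by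
  have hrev : erev x ∉ c := fun h => not_pos_splitFlow_erev (hpos x hx) (hpos _ h)
  rw [Function.ne_iff]
  cases x with
  | inl a => exact ⟨a, by simp_all [cycVec_apply_of_nodup hc, erev]⟩
  | inr a => exact ⟨a, by simp_all [cycVec_apply_of_nodup hc, erev]⟩

end QuiverCycles

open QuiverCycles in
/-- any nonzero element `w` of `Ker U` dominates the vector `u` of some primitive
nonoriented cycle; such a `u` is nonzero, has entries in `{-1, 0, 1}` and lies in `Ker U`. -/
theorem exists_primitive_cycle_vector_le {V A : Type} [Fintype V] [Fintype A]
    [DecidableEq V] [DecidableEq A] (s t : A → V)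
    (w : A → ℤ) (hw : w ≠ 0)
    (hker : (∑ a, w a • (Pi.single (t a) 1 - Pi.single (s a) 1 : V → ℤ)) = 0) :
    ∃ (e : A ⊕ A) (l : List (A ⊕ A)),
      IsNonorientedCycle s t e l ∧ IsPrimitive s t e l ∧
      (cycVec (e :: l) : A → ℤ) ≠ 0 ∧
      (∀ a, cycVec (e :: l) a = -1 ∨ cycVec (e :: l) a = 0 ∨ cycVec (e :: l) a = 1) ∧
      (∑ a, cycVec (e :: l) a • (Pi.single (t a) 1 - Pi.single (s a) 1 : V → ℤ)) = 0 ∧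
      (∀ a, (cycVec (e :: l) a).toNat ≤ (w a).toNat) ∧
      (∀ a, (-(cycVec (e :: l) a)).toNat ≤ (-(w a)).toNat) := by
  obtain ⟨γ, n, hn, hpos, hstep, hper, hinj⟩ := exists_periodic_walk (esrc s t) (etgt s t)
    (E := {x | 0 < splitFlow w x}) (exists_pos_splitFlow hw) fun _ hx =>
      exists_pos_src_eq_tgt_of_circulation (esrc s t) (etgt s t) (splitFlow_nonneg w)
        ((sum_splitFlow_smul_edgeBoundary s t w).trans hker) hx
  obtain ⟨m, rfl⟩ := Nat.exists_eq_succ_of_ne_zero hn.ne'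
  have hback : ∀ k, γ (k + 1) ≠ erev (γ k) := fun k h =>
    not_pos_splitFlow_erev (hpos k) (h ▸ hpos (k + 1))
  have hprim := isPrimitive_of_injOn s t hinj
  refine ⟨γ 0, (List.range m).map fun k => γ (k + 1),
    isNonorientedCycle_of_periodic s t hstep hback hper, hprim, ?_⟩
  rw [← List.map_range_succ_eq_cons]
  have hnodup : ((List.range (m + 1)).map γ).Nodup := by
    rw [List.map_range_succ_eq_cons]
    exact hprim.of_map _
  have hmem : ∀ x ∈ (List.range (m + 1)).map γ, 0 < splitFlow w x :=
    List.forall_mem_map.2 fun k _ => hpos k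
  refine ⟨cycVec_ne_zero_of_mem hnodup hmem (List.mem_map_of_mem (List.mem_range.2 m.succ_pos)),
    fun a => ?_, (sum_cycVec_smul_edgeBoundary s t _).trans
      (sum_map_edgeBoundary_eq_zero_of_periodic s t hstep hper), fun a => ?_, fun a => ?_⟩ <;>
  rcases cycVec_apply_cases hnodup hmem a with ⟨h, hwa⟩ | h | ⟨h, hwa⟩ <;> rw [h] <;> omega
end

section
/- Let Q be a finite quiver and suppose every nonzero w ∈ Ker(U) dominates some u ∈ Z (i.e., u⁺ ≤ w⁺ and u⁻ ≤ w⁻ componentwise), where Z ⊆ Ker(U) is a set of nonzero vectors with entries in {-1,0,1}. Then for every w ∈ Ker(U) the binomial S^{w⁺} - S^{w⁻} in k[S_α : α ∈ Q_1] lies in the ideal generated by the binomials S^{u⁺} - S^{u⁻}, u ∈ Z. -/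
/-- if every nonzero element of `Ker U` dominates an element of a set `Z` of
nonzero `{-1,0,1}`-vectors in `Ker U`, then for every `w ∈ Ker U` the binomial
`S^{w⁺} - S^{w⁻}` lies in the ideal generated by the binomials `S^{u⁺} - S^{u⁻}`, `u ∈ Z`. -/
theorem binomial_mem_span_of_domination
    {V A : Type} [Fintype V] [Fintype A] [DecidableEq V] (s t : A → V)
    (k : Type) [Field k]
    (Z : Set (A → ℤ))
    (hZ : ∀ u ∈ Z, u ≠ 0 ∧ (∀ a, u a = -1 ∨ u a = 0 ∨ u a = 1) ∧
      (∑ a, u a • (Pi.single (t a) 1 - Pi.single (s a) 1 : V → ℤ)) = 0)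
    (hdom : ∀ w : A → ℤ,
      (∑ a, w a • (Pi.single (t a) 1 - Pi.single (s a) 1 : V → ℤ)) = 0 → w ≠ 0 →
      ∃ u ∈ Z, (∀ a, (u a).toNat ≤ (w a).toNat) ∧ (∀ a, (-(u a)).toNat ≤ (-(w a)).toNat))
    (w : A → ℤ)
    (hw : (∑ a, w a • (Pi.single (t a) 1 - Pi.single (s a) 1 : V → ℤ)) = 0) :
    ((∏ a, MvPolynomial.X a ^ (w a).toNat) - ∏ a, MvPolynomial.X a ^ (-(w a)).toNat :
        MvPolynomial A k) ∈
      Ideal.span {p : MvPolynomial A k | ∃ u ∈ Z,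
        p = (∏ a, MvPolynomial.X a ^ (u a).toNat) - ∏ a, MvPolynomial.X a ^ (-(u a)).toNat} := by
  suffices H : ∀ n : ℕ, ∀ w : A → ℤ,
      (∑ a, ((w a).toNat + (-(w a)).toNat)) ≤ n →
      (∑ a, w a • (Pi.single (t a) 1 - Pi.single (s a) 1 : V → ℤ)) = 0 →
      ((∏ a, MvPolynomial.X a ^ (w a).toNat) - ∏ a, MvPolynomial.X a ^ (-(w a)).toNat :
          MvPolynomial A k) ∈
        Ideal.span {p : MvPolynomial A k | ∃ u ∈ Z,
          p = (∏ a, MvPolynomial.X a ^ (u a).toNat) -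
            ∏ a, MvPolynomial.X a ^ (-(u a)).toNat} by
    exact H _ w le_rfl hw
  intro n
  induction n with
  | zero =>
    intro w hle _
    have hz : ∀ a, w a = 0 := by
      intro a
      have h1 : ((w a).toNat + (-(w a)).toNat) ≤
          ∑ b, ((w b).toNat + (-(w b)).toNat) :=
        Finset.single_le_sum (f := fun b => ((w b).toNat + (-(w b)).toNat))
          (fun i _ => Nat.zero_le _) (Finset.mem_univ a)
      omega
    have : ∀ a, (w a).toNat = (-(w a)).toNat := fun a => by rw [hz a]; rfl
    simp only [this, sub_self]
    exact Ideal.zero_mem _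
  | succ n ih =>
    intro w hle hker
    by_cases hw0 : w = 0
    · subst hw0
      simp only [Pi.zero_apply, neg_zero, sub_self]
      exact Ideal.zero_mem _
    obtain ⟨u, huZ, hd1, hd2⟩ := hdom w hker hw0
    obtain ⟨hu0, _, hukerr⟩ := hZ u huZ
    set v : A → ℤ := w - u with hv
    have hpos : ∀ a, (w a).toNat = (v a).toNat + (u a).toNat := by
      intro a
      have := hd1 a; have := hd2 a
      simp only [hv, Pi.sub_apply]
      omega
    have hneg : ∀ a, (-(w a)).toNat = (-(v a)).toNat + (-(u a)).toNat := by
      intro a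
      have := hd1 a; have := hd2 a
      simp only [hv, Pi.sub_apply]
      omega
    -- v is in the kernel
    have hkv : (∑ a, v a • (Pi.single (t a) 1 - Pi.single (s a) 1 : V → ℤ)) = 0 := by
      have : ∀ a, v a • (Pi.single (t a) 1 - Pi.single (s a) 1 : V → ℤ) =
          w a • (Pi.single (t a) 1 - Pi.single (s a) 1 : V → ℤ) -
          u a • (Pi.single (t a) 1 - Pi.single (s a) 1 : V → ℤ) := by
        intro a; rw [hv]; simp [sub_smul]
      simp only [this, Finset.sum_sub_distrib, hker, hukerr, sub_self]
    -- measure decreases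
    have husum : 1 ≤ ∑ a, ((u a).toNat + (-(u a)).toNat) := by
      obtain ⟨a, ha⟩ := Function.ne_iff.mp hu0
      simp only [Pi.zero_apply] at ha
      calc 1 ≤ (u a).toNat + (-(u a)).toNat := by omega
        _ ≤ ∑ b, ((u b).toNat + (-(u b)).toNat) :=
          Finset.single_le_sum (f := fun b => ((u b).toNat + (-(u b)).toNat))
            (fun i _ => Nat.zero_le _) (Finset.mem_univ a)
    have hsplit : (∑ a, ((w a).toNat + (-(w a)).toNat)) =
        (∑ a, ((v a).toNat + (-(v a)).toNat)) + ∑ a, ((u a).toNat + (-(u a)).toNat) := by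
      rw [← Finset.sum_add_distrib]
      exact Finset.sum_congr rfl fun a _ => by rw [hpos a, hneg a]; omega
    have hvle : (∑ a, ((v a).toNat + (-(v a)).toNat)) ≤ n := by
      clear_value v
      omega
    -- induction hypothesis for v
    have hvmem := ih v hvle hkv
    -- generator for u
    have humem : ((∏ a, MvPolynomial.X a ^ (u a).toNat) -
        ∏ a, MvPolynomial.X a ^ (-(u a)).toNat : MvPolynomial A k) ∈
        Ideal.span {p : MvPolynomial A k | ∃ u ∈ Z,
          p = (∏ a, MvPolynomial.X a ^ (u a).toNat) -
            ∏ a, MvPolynomial.X a ^ (-(u a)).toNat} :=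
      Ideal.subset_span ⟨u, huZ, rfl⟩
    have keyp : (∏ a, MvPolynomial.X a ^ (w a).toNat : MvPolynomial A k) =
        (∏ a, MvPolynomial.X a ^ (v a).toNat) * ∏ a, MvPolynomial.X a ^ (u a).toNat := by
      rw [← Finset.prod_mul_distrib]
      exact Finset.prod_congr rfl fun a _ => by rw [← pow_add, hpos a]
    have keyn : (∏ a, MvPolynomial.X a ^ (-(w a)).toNat : MvPolynomial A k) =
        (∏ a, MvPolynomial.X a ^ (-(v a)).toNat) * ∏ a, MvPolynomial.X a ^ (-(u a)).toNat := by
      rw [← Finset.prod_mul_distrib]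
      exact Finset.prod_congr rfl fun a _ => by rw [← pow_add, hneg a]
    have decomp : ((∏ a, MvPolynomial.X a ^ (w a).toNat) -
        ∏ a, MvPolynomial.X a ^ (-(w a)).toNat : MvPolynomial A k) =
        (∏ a, MvPolynomial.X a ^ (v a).toNat) *
          ((∏ a, MvPolynomial.X a ^ (u a).toNat) - ∏ a, MvPolynomial.X a ^ (-(u a)).toNat) +
        (∏ a, MvPolynomial.X a ^ (-(u a)).toNat) *
          ((∏ a, MvPolynomial.X a ^ (v a).toNat) - ∏ a, MvPolynomial.X a ^ (-(v a)).toNat) := by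
      rw [keyp, keyn]; ring
    rw [decomp]
    exact Ideal.add_mem _ (Ideal.mul_mem_left _ _ humem) (Ideal.mul_mem_left _ _ hvmem)
end
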